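/- Let m ≥ n ≥ 1 and f = Σ_{j=m+1}^{m+n} e_{j,j-n} ∈ gl(m+n, ℂ). Then the centralizer gl(m+n)^f = {x ∈ gl(m+n, ℂ) : [f, x] = 0} has dimension m² + n². -/

import Mathlib

open Matrix

noncomputable def nilpF (m n : ℕ) (h : n ≤ m) : Matrix (Fin (m + n)) (Fin (m + n)) ℂ :=
  ∑ j : Fin n, Matrix.single ⟨m + j, by have := j.isLt; omega⟩
    ⟨m - n + j, by have := j.isLt; omega⟩ 1

namespace NilpAux

variable {m n : ℕ}

/-- row index `m + t`. -/
def rI (m : ℕ) (t : Fin n) : Fin (m + n) := ⟨m + t, by have := t.isLt; omega⟩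

/-- column index `m - n + t`. -/
def cI (m : ℕ) (t : Fin n) : Fin (m + n) := ⟨m - n + t, by have := t.isLt; omega⟩

variable (h : n ≤ m)

lemma nilpF_eq : nilpF m n h = ∑ t : Fin n, Matrix.single (rI m t) (cI m t) (1 : ℂ) := rfl

lemma mulF_r (x : Matrix (Fin (m+n)) (Fin (m+n)) ℂ) (t : Fin n) (k : Fin (m+n)) :
    (nilpF m n h * x) (rI m t) k = x (cI m t) k := by
  rw [nilpF_eq, Finset.sum_mul, Matrix.sum_apply]
  rw [Finset.sum_eq_single t]
  · simp
  · intro b _ hb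
    apply Matrix.single_mul_apply_of_ne
    simp only [rI, ne_eq, Fin.mk.injEq]
    have := Fin.val_ne_of_ne hb
    omega
  · simp

lemma mulF_lo (x : Matrix (Fin (m+n)) (Fin (m+n)) ℂ) (i k : Fin (m+n)) (hi : (i : ℕ) < m) :
    (nilpF m n h * x) i k = 0 := by
  rw [nilpF_eq, Finset.sum_mul, Matrix.sum_apply]
  apply Finset.sum_eq_zero
  intro t _
  apply Matrix.single_mul_apply_of_ne
  simp only [rI, ne_eq, Fin.ext_iff]
  omega

lemma fMul_c (x : Matrix (Fin (m+n)) (Fin (m+n)) ℂ) (i : Fin (m+n)) (t : Fin n) :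
    (x * nilpF m n h) i (cI m t) = x i (rI m t) := by
  rw [nilpF_eq, Finset.mul_sum, Matrix.sum_apply]
  rw [Finset.sum_eq_single t]
  · simp
  · intro b _ hb
    apply Matrix.mul_single_apply_of_ne
    simp only [cI, ne_eq, Fin.mk.injEq]
    have := Fin.val_ne_of_ne hb
    omega
  · simp

lemma fMul_zero (x : Matrix (Fin (m+n)) (Fin (m+n)) ℂ) (i k : Fin (m+n))
    (hk : (k : ℕ) < m - n ∨ m ≤ (k : ℕ)) :
    (x * nilpF m n h) i k = 0 := by
  rw [nilpF_eq, Finset.mul_sum, Matrix.sum_apply]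
  apply Finset.sum_eq_zero
  intro t _
  apply Matrix.mul_single_apply_of_ne
  simp only [cI, ne_eq, Fin.ext_iff]
  have := t.isLt
  omega

/-- the commutation relation given the three entry conditions. -/
lemma comm_of (x : Matrix (Fin (m+n)) (Fin (m+n)) ℂ)
    (h1 : ∀ t s : Fin n, x (cI m t) (cI m s) = x (rI m t) (rI m s))
    (h2 : ∀ (t : Fin n) (k : Fin (m+n)), ((k : ℕ) < m - n ∨ m ≤ (k : ℕ)) → x (cI m t) k = 0)
    (h3 : ∀ (i : Fin (m+n)) (s : Fin n), (i : ℕ) < m → x i (rI m s) = 0) :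
    nilpF m n h * x = x * nilpF m n h := by
  ext i k
  by_cases hi : (i : ℕ) < m
  · rw [mulF_lo h x i k hi]
    by_cases hk : (k : ℕ) < m - n ∨ m ≤ (k : ℕ)
    · rw [fMul_zero h x i k hk]
    · have hk' : m - n ≤ (k : ℕ) ∧ (k : ℕ) < m := by omega
      have : k = cI m ⟨(k : ℕ) - (m - n), by omega⟩ := by
        simp only [cI, Fin.ext_iff]; omega
      rw [this, fMul_c h, h3 i _ hi]
  · have hi' : i = rI m ⟨(i : ℕ) - m, by have := i.isLt; omega⟩ := by
      simp only [rI, Fin.ext_iff]; omega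
    rw [hi', mulF_r h]
    by_cases hk : (k : ℕ) < m - n ∨ m ≤ (k : ℕ)
    · rw [fMul_zero h x _ k hk, h2 _ k hk]
    · have hk' : m - n ≤ (k : ℕ) ∧ (k : ℕ) < m := by omega
      have : k = cI m ⟨(k : ℕ) - (m - n), by omega⟩ := by
        simp only [cI, Fin.ext_iff]; omega
      rw [this, fMul_c h, h1]

/-- the explicit matrix built from the free parameters. -/
def psiFun (A : Matrix (Fin (m - n)) (Fin m) ℂ) (B : Matrix (Fin n) (Fin (m + n)) ℂ) :
    Matrix (Fin (m+n)) (Fin (m+n)) ℂ :=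
  Matrix.of fun i k =>
    if hi : (i : ℕ) < m - n then
      if hk : (k : ℕ) < m then A ⟨i, hi⟩ ⟨k, hk⟩ else 0
    else if hi2 : (i : ℕ) < m then
      if hk : m - n ≤ (k : ℕ) ∧ (k : ℕ) < m then
        B ⟨(i : ℕ) - (m - n), by omega⟩ ⟨m + ((k : ℕ) - (m - n)), by omega⟩
      else 0
    else B ⟨(i : ℕ) - m, by have := i.isLt; omega⟩ k

lemma psiFun_rI (A : Matrix (Fin (m - n)) (Fin m) ℂ) (B : Matrix (Fin n) (Fin (m + n)) ℂ)
    (t : Fin n) (k : Fin (m+n)) : psiFun h A B (rI m t) k = B t k := by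
  have ht := t.isLt
  simp only [psiFun, of_apply, rI]
  rw [dif_neg (by first | (simp; omega) | simp | omega), dif_neg (by first | (simp; omega) | simp | omega)]
  congr 1
  simp only [Fin.ext_iff]
  omega

lemma psiFun_cI_cI (A : Matrix (Fin (m - n)) (Fin m) ℂ) (B : Matrix (Fin n) (Fin (m + n)) ℂ)
    (t s : Fin n) : psiFun h A B (cI m t) (cI m s) = B t (rI m s) := by
  have ht := t.isLt; have hs := s.isLt
  simp only [psiFun, of_apply, cI]
  rw [dif_neg (by first | (simp; omega) | simp | omega), dif_pos (by first | (simp; omega) | simp | omega), dif_pos (by first | (simp; omega) | simp | omega)]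
  congr 1 <;> simp only [Fin.ext_iff, rI] <;> omega

lemma psiFun_cI_zero (A : Matrix (Fin (m - n)) (Fin m) ℂ) (B : Matrix (Fin n) (Fin (m + n)) ℂ)
    (t : Fin n) (k : Fin (m+n)) (hk : (k : ℕ) < m - n ∨ m ≤ (k : ℕ)) :
    psiFun h A B (cI m t) k = 0 := by
  have ht := t.isLt
  simp only [psiFun, of_apply, cI]
  rw [dif_neg (by first | (simp; omega) | simp | omega), dif_pos (by first | (simp; omega) | simp | omega), dif_neg (by omega)]

lemma psiFun_lo_rI (A : Matrix (Fin (m - n)) (Fin m) ℂ) (B : Matrix (Fin n) (Fin (m + n)) ℂ)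
    (i : Fin (m+n)) (s : Fin n) (hi : (i : ℕ) < m) :
    psiFun h A B i (rI m s) = 0 := by
  have hs := s.isLt
  simp only [psiFun, of_apply, rI]
  by_cases hi1 : (i : ℕ) < m - n
  · rw [dif_pos hi1, dif_neg (by first | (simp; omega) | simp | omega)]
  · rw [dif_neg hi1, dif_pos (by simpa using hi), dif_neg (by first | (simp; omega) | simp | omega)]

lemma psiFun_comm (A : Matrix (Fin (m - n)) (Fin m) ℂ) (B : Matrix (Fin n) (Fin (m + n)) ℂ) :
    nilpF m n h * psiFun h A B = psiFun h A B * nilpF m n h := by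
  apply comm_of
  · intro t s
    rw [psiFun_cI_cI h, psiFun_rI h]
  · intro t k hk
    exact psiFun_cI_zero h A B t k hk
  · intro i s hi
    exact psiFun_lo_rI h A B i s hi

lemma psiFun_add (A A' : Matrix (Fin (m - n)) (Fin m) ℂ) (B B' : Matrix (Fin n) (Fin (m + n)) ℂ) :
    psiFun h (A + A') (B + B') = psiFun h A B + psiFun h A' B' := by
  ext i k
  simp only [psiFun, of_apply, Matrix.add_apply]
  split_ifs <;> simp

lemma psiFun_smul (c : ℂ) (A : Matrix (Fin (m - n)) (Fin m) ℂ) (B : Matrix (Fin n) (Fin (m + n)) ℂ) :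
    psiFun h (c • A) (c • B) = c • psiFun h A B := by
  ext i k
  simp only [psiFun, of_apply, Matrix.smul_apply]
  split_ifs <;> simp

/-- reconstruct `x` in the centralizer from its parameters. -/
lemma psiFun_of_comm (x : Matrix (Fin (m+n)) (Fin (m+n)) ℂ)
    (hx : nilpF m n h * x = x * nilpF m n h) :
    psiFun h (fun (i : Fin (m - n)) (k : Fin m) => x ⟨i, by have := i.isLt; omega⟩ ⟨k, by have := k.isLt; omega⟩)
      (fun (t : Fin n) (k : Fin (m + n)) => x (rI m t) k) = x := by
  have h1 : ∀ t s : Fin n, x (cI m t) (cI m s) = x (rI m t) (rI m s) := by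
    intro t s
    have := congrFun (congrFun hx (rI m t)) (cI m s)
    rwa [mulF_r h, fMul_c h] at this
  have h2 : ∀ (t : Fin n) (k : Fin (m+n)), ((k : ℕ) < m - n ∨ m ≤ (k : ℕ)) → x (cI m t) k = 0 := by
    intro t k hk
    have := congrFun (congrFun hx (rI m t)) k
    rwa [mulF_r h, fMul_zero h x _ k hk] at this
  have h3 : ∀ (i : Fin (m+n)) (s : Fin n), (i : ℕ) < m → x i (rI m s) = 0 := by
    intro i s hi
    have := congrFun (congrFun hx i) (cI m s)
    rw [mulF_lo h x i _ hi, fMul_c h] at this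
    exact this.symm
  ext i k
  simp only [psiFun, of_apply]
  split_ifs with hi1 hk1 hi2 hk2
  · rfl
  · -- i < m - n ≤ m, k ≥ m : k = rI s
    have : k = rI m ⟨(k : ℕ) - m, by have := k.isLt; omega⟩ := by
      simp only [rI, Fin.ext_iff]; omega
    rw [this, h3 i _ (by omega)]
  · -- m - n ≤ i < m, m - n ≤ k < m
    have hi' : i = cI m ⟨(i : ℕ) - (m - n), by omega⟩ := by
      simp only [cI, Fin.ext_iff]; omega
    have hk' : k = cI m ⟨(k : ℕ) - (m - n), by omega⟩ := by
      simp only [cI, Fin.ext_iff]; omega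
    have key : x i k = x (rI m ⟨(i : ℕ) - (m - n), by omega⟩) (rI m ⟨(k : ℕ) - (m - n), by omega⟩) := by
      conv_lhs => rw [hi', hk']
      exact h1 _ _
    rw [key]
    rfl
  · -- m - n ≤ i < m, k outside [m-n, m)
    have hi' : i = cI m ⟨(i : ℕ) - (m - n), by omega⟩ := by
      simp only [cI, Fin.ext_iff]; omega
    rw [hi', h2 _ k (by omega)]
  · -- i ≥ m
    have hi' : i = rI m ⟨(i : ℕ) - m, by have := i.isLt; omega⟩ := by
      simp only [rI, Fin.ext_iff]; omega
    conv_rhs => rw [hi']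

end NilpAux

open NilpAux in
/-- The centralizer `gl(m+n)^f = {x : [f,x] = 0}` (the kernel of `ad f = mulLeft f - mulRight f`)
has dimension `m² + n²`. -/
theorem stmt1 (m n : ℕ) (hn : 1 ≤ n) (h : n ≤ m) :
    Module.finrank ℂ
      (LinearMap.ker (LinearMap.mulLeft ℂ (nilpF m n h) - LinearMap.mulRight ℂ (nilpF m n h)))
      = m ^ 2 + n ^ 2 := by
  set K := LinearMap.ker (LinearMap.mulLeft ℂ (nilpF m n h) - LinearMap.mulRight ℂ (nilpF m n h))
    with hK
  have memK : ∀ x, x ∈ K ↔ nilpF m n h * x = x * nilpF m n h := by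
    intro x
    rw [hK, LinearMap.mem_ker, LinearMap.sub_apply, LinearMap.mulLeft_apply,
      LinearMap.mulRight_apply, sub_eq_zero]
  let P := Matrix (Fin (m - n)) (Fin m) ℂ × Matrix (Fin n) (Fin (m + n)) ℂ
  let e : P ≃ₗ[ℂ] K :=
    { toFun := fun p => ⟨psiFun h p.1 p.2, (memK _).2 (psiFun_comm h p.1 p.2)⟩
      map_add' := fun p q => by
        apply Subtype.ext
        show psiFun h (p.1 + q.1) (p.2 + q.2) = psiFun h p.1 p.2 + psiFun h q.1 q.2
        exact psiFun_add h p.1 q.1 p.2 q.2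
      map_smul' := fun c p => by
        apply Subtype.ext
        show psiFun h (c • p.1) (c • p.2) = c • psiFun h p.1 p.2
        exact psiFun_smul h c p.1 p.2
      invFun := fun x =>
        ((fun i k => x.1 ⟨i, by have := i.isLt; omega⟩ ⟨k, by have := k.isLt; omega⟩),
         (fun t k => x.1 (rI m t) k))
      left_inv := by
        rintro ⟨A, B⟩
        refine Prod.ext ?_ ?_
        · ext i k
          have hi := i.isLt; have hk := k.isLt
          show psiFun h A B _ _ = A i k
          simp only [psiFun, of_apply]
          rw [dif_pos (by simpa using hi), dif_pos (by simpa using hk)]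
        · ext t k
          exact psiFun_rI h A B t k
      right_inv := by
        rintro ⟨x, hx⟩
        ext i k
        exact congrFun (congrFun (psiFun_of_comm h x ((memK x).1 hx)) i) k }
  rw [← e.finrank_eq]
  have : Module.finrank ℂ P = (m - n) * m + n * (m + n) := by
    rw [Module.finrank_prod, Module.finrank_matrix, Module.finrank_matrix]
    simp
  rw [this]
  obtain ⟨k, rfl⟩ := Nat.exists_eq_add_of_le h
  simp only [Nat.add_sub_cancel_left]
  ring
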